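/- arXiv:2208.04904 — 9 statements merged into one kernel-verified Lean document; each statement's English description precedes it below -/
import Mathlib

section
/- Let S be an inverse semigroup with zero. Define S^iso = {s ∈ S : for every nonzero idempotent f ≤ s*s, the element (s f s*) f is nonzero}. Then S^iso is closed under the inverse operation: if s ∈ S^iso then s* ∈ S^iso. -/
/-- In an inverse semigroup with zero, the set
`S^iso = {s : every nonzero idempotent f ≤ s*s has s f s* f ≠ 0}` is closed
under the inverse operation. -/
theorem stmt0 {S : Type*} [Semigroup S] (star : S → S) (z : S)
    (hz : ∀ s : S, z * s = z ∧ s * z = z)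
    (hinv : ∀ s : S, s * star s * s = s)
    (hinv' : ∀ s : S, star s * s * star s = star s)
    (huniq : ∀ s t : S, s * t * s = s → t * s * t = t → t = star s)
    (s : S)
    (hs : ∀ f : S, f * f = f → f ≠ z → f * (star s * s) = f →
      s * f * star s * f ≠ z) :
    ∀ f : S, f * f = f → f ≠ z → f * (star (star s) * star s) = f →
      star s * f * star (star s) * f ≠ z := by
  have hss : star (star s) = s := (huniq (star s) s (hinv' s) (hinv s)).symm
  -- star of an idempotent is itself
  have star_idem : ∀ e : S, e * e = e → star e = e := by
    intro e he
    exact (huniq e e (by rw [he, he]) (by rw [he, he])).symm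
  -- product of two idempotents is idempotent
  have prod_idem : ∀ a b : S, a * a = a → b * b = b → (a * b) * (a * b) = a * b := by
    intro a b ha hb
    have ha' : ∀ y : S, a * (a * y) = a * y := fun y => by rw [← mul_assoc, ha]
    have hb' : ∀ y : S, b * (b * y) = b * y := fun y => by rw [← mul_assoc, hb]
    set x := star (a * b) with hx
    have h1 : a * b * x * (a * b) = a * b := hinv (a * b)
    have h2 : x * (a * b) * x = x := hinv' (a * b)
    have h1' : ∀ y : S, a * (b * (x * (a * (b * y)))) = a * (b * y) := fun y => by
      have := congrArg (· * y) h1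
      simpa [mul_assoc] using this
    have h2' : ∀ y : S, x * (a * (b * (x * y))) = x * y := fun y => by
      have := congrArg (· * y) h2
      simpa [mul_assoc] using this
    have hbxa : b * x * a = x := by
      rw [hx]
      apply huniq (a * b) (b * x * a)
      · simp only [mul_assoc]
        rw [hb', ha']
        have := h1
        simpa [mul_assoc] using this
      · simp only [mul_assoc]
        rw [ha', hb', h2' a]
    have hxx : x * x = x := by
      conv_lhs => rw [← hbxa]
      simp only [mul_assoc]
      rw [h2' a, ← mul_assoc]
      exact hbxa
    have hab : a * b = x := by
      have h := huniq x (a * b) h2 h1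
      rwa [star_idem x hxx] at h
    rw [hab]; exact hxx
  -- idempotents commute
  have comm : ∀ a b : S, a * a = a → b * b = b → a * b = b * a := by
    intro a b ha hb
    have ha' : ∀ y : S, a * (a * y) = a * y := fun y => by rw [← mul_assoc, ha]
    have hb' : ∀ y : S, b * (b * y) = b * y := fun y => by rw [← mul_assoc, hb]
    have hab := prod_idem a b ha hb
    have hba := prod_idem b a hb ha
    have : b * a = star (a * b) := by
      apply huniq (a * b) (b * a)
      · simp only [mul_assoc]
        rw [hb', ha']
        simpa [mul_assoc] using hab
      · simp only [mul_assoc]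
        rw [ha', hb']
        simpa [mul_assoc] using hba
    rw [this, star_idem (a * b) hab]
  -- main argument
  intro f hf hfz hfle
  rw [hss] at hfle ⊢
  have hf' : ∀ y : S, f * (f * y) = f * y := fun y => by rw [← mul_assoc, hf]
  -- e = s * star s is idempotent
  have he : (s * star s) * (s * star s) = s * star s := by
    simp only [mul_assoc]
    have := hinv' s
    rw [mul_assoc] at this
    rw [this]
  have hef : (s * star s) * f = f := by rw [← comm f (s * star s) hf he]; exact hfle
  have hef' : ∀ y : S, s * (star s * (f * y)) = f * y := fun y => by
    have := congrArg (· * y) hef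
    simpa [mul_assoc] using this
  set g := star s * (f * s) with hg
  have hgidem : g * g = g := by
    rw [hg]
    simp only [mul_assoc]
    rw [hef' s, hf']
  have hsg : ∀ y : S, s * (g * y) = f * (s * y) := fun y => by
    rw [hg]; simp only [mul_assoc]; rw [hef']
  have hgz : g ≠ z := by
    intro h
    apply hfz
    have : s * (g * star s) = f := by
      rw [hsg (star s)]
      exact hfle
    rw [h, (hz (star s)).1, (hz s).2] at this
    exact this.symm
  have hgle : g * (star s * s) = g := by
    rw [hg]
    simp only [mul_assoc]
    have : s * (star s * s) = s := by rw [← mul_assoc]; exact hinv s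
    rw [this]
  have key := hs g hgidem hgz hgle
  -- s * g * star s * g = f * g
  have hcalc : s * g * star s * g = f * g := by
    have h1 : s * g * star s = f := by
      rw [mul_assoc, hsg (star s)]
      exact hfle
    rw [h1]
  rw [hcalc] at key
  have hgoal : star s * f * s * f = g * f := by
    rw [hg]; simp only [mul_assoc]
  rw [hgoal, ← comm f g hf hgidem]
  exact key
end

section
/- Let S be an inverse semigroup with zero and let S^iso = {s ∈ S : s*s is weakly fixed by s}. Then S^iso is closed under multiplication: if s, t ∈ S^iso then st ∈ S^iso. -/
private lemma aux_star_idem {S : Type*} [Semigroup S] (star : S → S)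
    (huniq : ∀ s t : S, s * t * s = s → t * s * t = t → t = star s)
    (e : S) (he : e * e = e) : star e = e := by
  have h1 : e * e * e = e := by rw [he, he]
  exact (huniq e e h1 h1).symm

private lemma aux_prod_idem {S : Type*} [Semigroup S] (star : S → S)
    (hinv : ∀ s : S, s * star s * s = s)
    (hinv' : ∀ s : S, star s * s * star s = star s)
    (huniq : ∀ s t : S, s * t * s = s → t * s * t = t → t = star s)
    (e f : S) (he : e * e = e) (hf : f * f = f) :
    (e * f) * (e * f) = e * f := by
  set x := star (e * f) with hx
  have heA : ∀ y : S, e * (e * y) = e * y := fun y => by rw [← mul_assoc, he]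
  have hfA : ∀ y : S, f * (f * y) = f * y := fun y => by rw [← mul_assoc, hf]
  have hI'A : ∀ y : S, x * (e * (f * (x * y))) = x * y :=
    fun y => by simpa only [mul_assoc] using congrArg (· * y) (hinv' (e * f))
  have h1 : (e * f) * (f * x * e) * (e * f) = e * f := by
    calc (e * f) * (f * x * e) * (e * f)
        = e * (f * (f * (x * (e * (e * f))))) := by simp only [mul_assoc]
      _ = e * (f * (x * (e * f))) := by rw [hfA, heA]
      _ = e * f := by simpa only [mul_assoc] using hinv (e * f)
  have h2 : (f * x * e) * (e * f) * (f * x * e) = f * x * e := by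
    calc (f * x * e) * (e * f) * (f * x * e)
        = f * (x * (e * (e * (f * (f * (x * e)))))) := by simp only [mul_assoc]
      _ = f * (x * (e * (f * (x * e)))) := by rw [heA, hfA]
      _ = f * (x * e) := by rw [hI'A]
      _ = f * x * e := by rw [mul_assoc]
  have hxe : f * x * e = x := huniq (e * f) (f * x * e) h1 h2
  have hxx : x * x = x := by
    conv_lhs => rw [← hxe]
    calc (f * x * e) * (f * x * e)
        = f * (x * (e * (f * (x * e)))) := by simp only [mul_assoc]
      _ = f * (x * e) := by rw [hI'A]
      _ = f * x * e := by rw [mul_assoc]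
      _ = x := hxe
  have hxs : star x = x := aux_star_idem star huniq x hxx
  have hefx : e * f = x := by
    have := huniq x (e * f) (hinv' (e * f)) (hinv (e * f))
    rwa [hxs] at this
  rw [hefx]; exact hxx

private lemma aux_comm {S : Type*} [Semigroup S] (star : S → S)
    (hinv : ∀ s : S, s * star s * s = s)
    (hinv' : ∀ s : S, star s * s * star s = star s)
    (huniq : ∀ s t : S, s * t * s = s → t * s * t = t → t = star s)
    (e f : S) (he : e * e = e) (hf : f * f = f) :
    e * f = f * e := by
  have hef := aux_prod_idem star hinv hinv' huniq e f he hf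
  have hfe := aux_prod_idem star hinv hinv' huniq f e hf he
  have heA : ∀ y : S, e * (e * y) = e * y := fun y => by rw [← mul_assoc, he]
  have hfA : ∀ y : S, f * (f * y) = f * y := fun y => by rw [← mul_assoc, hf]
  have h1 : (e * f) * (f * e) * (e * f) = e * f := by
    calc (e * f) * (f * e) * (e * f)
        = e * (f * (f * (e * (e * f)))) := by simp only [mul_assoc]
      _ = e * (f * (e * f)) := by rw [hfA, heA]
      _ = e * f := by simpa only [mul_assoc] using hef
  have h2 : (f * e) * (e * f) * (f * e) = f * e := by
    calc (f * e) * (e * f) * (f * e)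
        = f * (e * (e * (f * (f * e)))) := by simp only [mul_assoc]
      _ = f * (e * (f * e)) := by rw [heA, hfA]
      _ = f * e := by simpa only [mul_assoc] using hfe
  have h3 : f * e = star (e * f) := huniq (e * f) (f * e) h1 h2
  rw [h3, aux_star_idem star huniq (e * f) hef]

private lemma aux_star_mul {S : Type*} [Semigroup S] (star : S → S)
    (hinv : ∀ s : S, s * star s * s = s)
    (hinv' : ∀ s : S, star s * s * star s = star s)
    (huniq : ∀ s t : S, s * t * s = s → t * s * t = t → t = star s)
    (a b : S) : star (a * b) = star b * star a := by
  have he2 : (star a * a) * (star a * a) = star a * a := by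
    rw [← mul_assoc, hinv' a]
  have he3 : (b * star b) * (b * star b) = b * star b := by
    rw [← mul_assoc, hinv b]
  have hc := aux_comm star hinv hinv' huniq (star a * a) (b * star b) he2 he3
  have hcA : ∀ y : S, star a * (a * (b * (star b * y))) = b * (star b * (star a * (a * y))) :=
    fun y => by simpa only [mul_assoc] using congrArg (· * y) hc
  have h1 : (a * b) * (star b * star a) * (a * b) = a * b := by
    calc (a * b) * (star b * star a) * (a * b)
        = a * (b * (star b * (star a * (a * b)))) := by simp only [mul_assoc]
      _ = a * (star a * (a * (b * (star b * b)))) := by rw [← hcA]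
      _ = a * (star a * (a * b)) := by
          have : b * (star b * b) = b := by rw [← mul_assoc, hinv b]
          rw [this]
      _ = a * b := by
          have := congrArg (· * b) (hinv a)
          simpa only [mul_assoc] using this
  have h2 : (star b * star a) * (a * b) * (star b * star a) = star b * star a := by
    calc (star b * star a) * (a * b) * (star b * star a)
        = star b * (star a * (a * (b * (star b * star a)))) := by simp only [mul_assoc]
      _ = star b * (b * (star b * (star a * (a * star a)))) := by rw [hcA]
      _ = star b * (b * (star b * star a)) := by
          have : star a * (a * star a) = star a := by rw [← mul_assoc, hinv' a]
          rw [this]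
      _ = star b * star a := by
          have := congrArg (· * star a) (hinv' b)
          simpa only [mul_assoc] using this
  exact (huniq (a * b) (star b * star a) h1 h2).symm


/-- In an inverse semigroup with zero, `S^iso` (elements `s` such
that `s*s` is weakly fixed by `s`) is closed under multiplication. -/
theorem stmt1 {S : Type*} [Semigroup S] (star : S → S) (z : S)
    (hz : ∀ s : S, z * s = z ∧ s * z = z)
    (hinv : ∀ s : S, s * star s * s = s)
    (hinv' : ∀ s : S, star s * s * star s = star s)
    (huniq : ∀ s t : S, s * t * s = s → t * s * t = t → t = star s)
    (s t : S)
    (hs : ∀ f : S, f * f = f → f ≠ z → f * (star s * s) = f →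
      s * f * star s * f ≠ z)
    (ht : ∀ f : S, f * f = f → f ≠ z → f * (star t * t) = f →
      t * f * star t * f ≠ z) :
    ∀ f : S, f * f = f → f ≠ z → f * (star (s * t) * (s * t)) = f →
      (s * t) * f * star (s * t) * f ≠ z := by
  intro f hf2 hf0 hff hzero
  have hsm : star (s * t) = star t * star s := aux_star_mul star hinv hinv' huniq s t
  rw [hsm] at hff hzero
  -- quantified rewriting helpers
  have hfA : ∀ y : S, f * (f * y) = f * y := fun y => by rw [← mul_assoc, hf2]
  have hffA : ∀ y : S, f * (star t * (star s * (s * (t * y)))) = f * y :=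
    fun y => by simpa only [mul_assoc] using congrArg (· * y) hff
  have hffR : f * (star t * (star s * (s * t))) = f := by
    simpa only [mul_assoc] using hff
  have httT : t * (star t * t) = t := by rw [← mul_assoc, hinv t]
  have ht'T : star t * (t * star t) = star t := by rw [← mul_assoc, hinv' t]
  have hinvtA : ∀ y : S, t * (star t * (t * y)) = t * y :=
    fun y => by simpa only [mul_assoc] using congrArg (· * y) (hinv t)
  have hinv'tA : ∀ y : S, star t * (t * (star t * y)) = star t * y :=
    fun y => by simpa only [mul_assoc] using congrArg (· * y) (hinv' t)
  -- f ≤ t* t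
  have hfe4 : f * (star t * t) = f := by
    calc f * (star t * t)
        = f * (star t * (star s * (s * (t * (star t * t))))) := (hffA (star t * t)).symm
      _ = f * (star t * (star s * (s * t))) := by rw [httT]
      _ = f := hffR
  have hfe4A : ∀ y : S, f * (star t * (t * y)) = f * y :=
    fun y => by simpa only [mul_assoc] using congrArg (· * y) hfe4
  -- g = t f t*
  set g := t * (f * star t) with hgdef
  have hg2 : g * g = g := by
    rw [hgdef]
    calc (t * (f * star t)) * (t * (f * star t))
        = t * (f * (star t * (t * (f * star t)))) := by simp only [mul_assoc]
      _ = t * (f * (f * star t)) := by rw [hfe4A]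
      _ = t * (f * star t) := by rw [hfA]
  have hg0 : g ≠ z := by
    intro hgz
    apply ht f hf2 hf0 hfe4
    calc t * f * star t * f = g * f := by rw [hgdef]; simp only [mul_assoc]
      _ = z * f := by rw [hgz]
      _ = z := (hz f).1
  -- idempotents star s * s  and  t * star t
  have he2 : (star s * s) * (star s * s) = star s * s := by rw [← mul_assoc, hinv' s]
  have he3 : (t * star t) * (t * star t) = t * star t := by rw [← mul_assoc, hinv t]
  have hce := aux_comm star hinv hinv' huniq (star s * s) (t * star t) he2 he3
  have hceT : star s * (s * (t * star t)) = t * (star t * (star s * s)) := by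
    simpa only [mul_assoc] using hce
  -- g ≤ s* s
  have hge2 : g * (star s * s) = g := by
    symm
    calc g = t * (f * star t) := hgdef
      _ = t * (f * (star t * (star s * (s * (t * star t))))) := by rw [hffA]
      _ = t * (f * (star t * (t * (star t * (star s * s))))) := by rw [hceT]
      _ = t * (f * (star t * (star s * s))) := by rw [hinv'tA]
      _ = g * (star s * s) := by rw [hgdef]; simp only [mul_assoc]
  have hge2A : ∀ y : S, g * (star s * (s * y)) = g * y :=
    fun y => by simpa only [mul_assoc] using congrArg (· * y) hge2
  have hgA : ∀ y : S, g * (g * y) = g * y := fun y => by rw [← mul_assoc, hg2]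
  -- w = (s g s*) g ≠ z
  have hw0 := hs g hg2 hg0 hge2
  set a := s * (g * star s) with hadef
  set w := a * g with hwdef
  have ha2 : a * a = a := by
    rw [hadef]
    calc (s * (g * star s)) * (s * (g * star s))
        = s * (g * (star s * (s * (g * star s)))) := by simp only [mul_assoc]
      _ = s * (g * (g * star s)) := by rw [hge2A]
      _ = s * (g * star s) := by rw [hgA]
  have hw2 : w * w = w := by
    rw [hwdef]; exact aux_prod_idem star hinv hinv' huniq a g ha2 hg2
  have hwz : w ≠ z := by
    intro h; apply hw0
    calc s * g * star s * g = w := by rw [hwdef, hadef]; simp only [mul_assoc]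
      _ = z := h
  have hwA : ∀ y : S, w * (w * y) = w * y := fun y => by rw [← mul_assoc, hw2]
  -- w * t = a * (t * f)
  have hwt : w * t = a * (t * f) := by
    rw [hwdef, hgdef]
    calc (a * (t * (f * star t))) * t
        = a * (t * (f * (star t * t))) := by simp only [mul_assoc]
      _ = a * (t * f) := by rw [hfe4]
  -- w * (t t*) = w
  have hgtt : g * (t * star t) = g := by
    rw [hgdef]
    calc (t * (f * star t)) * (t * star t)
        = t * (f * (star t * (t * star t))) := by simp only [mul_assoc]
      _ = t * (f * star t) := by rw [ht'T]
  have hwtt : w * (t * star t) = w := by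
    rw [hwdef]
    calc (a * g) * (t * star t) = a * (g * (t * star t)) := by rw [mul_assoc]
      _ = a * g := by rw [hgtt]
  have hwttA : ∀ y : S, w * (t * (star t * y)) = w * y :=
    fun y => by simpa only [mul_assoc] using congrArg (· * y) hwtt
  -- (t t*) * w = w
  have httg : (t * star t) * g = g := by
    rw [hgdef]
    calc (t * star t) * (t * (f * star t))
        = t * (star t * (t * (f * star t))) := by rw [mul_assoc]
      _ = t * (f * star t) := by rw [hinvtA]
  have hca := aux_comm star hinv hinv' huniq (t * star t) a he3 ha2
  have httw : (t * star t) * w = w := by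
    rw [hwdef, ← mul_assoc, hca, mul_assoc, httg]
  -- u = t* w t
  set u := star t * (w * t) with hudef
  have hwtA : ∀ y : S, w * (t * y) = a * (t * (f * y)) :=
    fun y => by simpa only [mul_assoc] using congrArg (· * y) hwt
  have huf : u * f = u := by
    rw [hudef]
    calc (star t * (w * t)) * f
        = star t * (w * (t * f)) := by simp only [mul_assoc]
      _ = star t * (a * (t * (f * f))) := by rw [hwtA]
      _ = star t * (a * (t * f)) := by rw [hf2]
      _ = star t * (w * t) := by rw [← hwt]
  have hu2 : u * u = u := by
    rw [hudef]
    calc (star t * (w * t)) * (star t * (w * t))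
        = star t * (w * (t * (star t * (w * t)))) := by simp only [mul_assoc]
      _ = star t * (w * (w * t)) := by rw [hwttA]
      _ = star t * (w * t) := by rw [hwA]
  -- t u t* = w
  have htut : t * (u * star t) = w := by
    rw [hudef]
    calc t * ((star t * (w * t)) * star t)
        = t * (star t * (w * (t * star t))) := by simp only [mul_assoc]
      _ = t * (star t * w) := by rw [hwtt]
      _ = (t * star t) * w := by rw [mul_assoc]
      _ = w := httw
  have hu0 : u ≠ z := by
    intro h
    rw [h] at htut
    apply hwz
    rw [← htut, (hz (star t)).1, (hz t).2]
  have hue4 : u * (star t * t) = u := by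
    rw [hudef]
    calc (star t * (w * t)) * (star t * t)
        = star t * (w * (t * (star t * t))) := by simp only [mul_assoc]
      _ = star t * (w * t) := by rw [httT]
  -- ht applied to u
  have hfin := ht u hu2 hu0 hue4
  have hwu : w * u ≠ z := by
    intro h; apply hfin
    calc t * u * star t * u = (t * (u * star t)) * u := by simp only [mul_assoc]
      _ = w * u := by rw [htut]
      _ = z := h
  -- final contradiction: w * u = (a * f) * (g * u) and a * f is the goal term
  apply hwu
  have hcfu := aux_comm star hinv hinv' huniq f u hf2 hu2
  have hfu : f * u = u := by rw [hcfu, huf]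
  have hcgf := aux_comm star hinv hinv' huniq g f hg2 hf2
  have haf : a * f = z := by
    rw [hadef, hgdef]
    calc (s * ((t * (f * star t)) * star s)) * f
        = s * t * f * (star t * star s) * f := by simp only [mul_assoc]
      _ = z := hzero
  calc w * u = a * (g * u) := by rw [hwdef, mul_assoc]
    _ = a * (g * (f * u)) := by rw [hfu]
    _ = a * ((g * f) * u) := by rw [← mul_assoc g f u]
    _ = a * ((f * g) * u) := by rw [hcgf]
    _ = (a * f) * (g * u) := by simp only [mul_assoc]
    _ = z * (g * u) := by rw [haf]
    _ = z := (hz _).1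
end

section
/- Let S be a 0-disjunctive inverse semigroup with zero. Then for every s ∈ S^iso and every nonzero idempotent e ≤ s*s, one has s e s* = e. -/
/-- In a 0-disjunctive inverse semigroup with zero, for every
`s ∈ S^iso` and every nonzero idempotent `e ≤ s*s` one has `s e s* = e`. -/
theorem stmt5 {S : Type*} [Semigroup S] (star : S → S) (z : S)
    (hz : ∀ s : S, z * s = z ∧ s * z = z)
    (hinv : ∀ s : S, s * star s * s = s)
    (hinv' : ∀ s : S, star s * s * star s = star s)
    (huniq : ∀ s t : S, s * t * s = s → t * s * t = t → t = star s)
    (hdis : ∀ e f : S, e * e = e → f * f = f → e ≠ z → e * f = e → e ≠ f →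
      ∃ e' : S, e' * e' = e' ∧ e' ≠ z ∧ e' * f = e' ∧ e' ≠ f ∧ e * e' = z)
    (s : S)
    (hs : ∀ f : S, f * f = f → f ≠ z → f * (star s * s) = f →
      s * f * star s * f ≠ z)
    (e : S) (he : e * e = e) (henz : e ≠ z) (hle : e * (star s * s) = e) :
    s * e * star s = e := by
  -- basic helpers
  have abs1 : ∀ a b : S, a * b = a → ∀ x : S, a * (b * x) = a * x := by
    intro a b h x; rw [← mul_assoc, h]
  have absR : ∀ a : S, a * (star s * s) = a → ∀ x : S, a * (star s * (s * x)) = a * x := by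
    intro a h x
    have := congrArg (· * x) h
    simpa [mul_assoc] using this
  have absL : ∀ a : S, a * (s * star s) = a → ∀ x : S, a * (s * (star s * x)) = a * x := by
    intro a h x
    have := congrArg (· * x) h
    simpa [mul_assoc] using this
  have hss : ∀ u : S, star (star u) = u := fun u => (huniq (star u) u (hinv' u) (hinv u)).symm
  have hsi : ∀ a : S, a * a = a → star a = a := by
    intro a ha
    have h1 : a * a * a = a := by rw [ha, ha]
    exact (huniq a a h1 h1).symm
  -- product of idempotents is idempotent
  have hmulidem : ∀ a b : S, a * a = a → b * b = b → (a * b) * (a * b) = a * b := by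
    intro a b ha hb
    have h2' : ∀ x, star (a*b) * (a * (b * (star (a*b) * x))) = star (a*b) * x := by
      intro x
      have := congrArg (· * x) (hinv' (a*b))
      simpa [mul_assoc] using this
    have h1 : (a*b) * (b * star (a*b) * a) * (a*b) = a*b := by
      have h := hinv (a*b)
      simp only [mul_assoc] at h ⊢
      rw [abs1 b b hb, abs1 a a ha]
      exact h
    have h2 : (b * star (a*b) * a) * (a*b) * (b * star (a*b) * a) = b * star (a*b) * a := by
      simp only [mul_assoc]
      rw [abs1 a a ha, abs1 b b hb, h2']
    have h3 : b * star (a*b) * a = star (a*b) := huniq (a*b) _ h1 h2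
    have h4 : star (a*b) * star (a*b) = star (a*b) := by
      conv_lhs => rw [← h3]
      simp only [mul_assoc]
      rw [h2', ← mul_assoc, h3]
    have h5 : a * b = star (a*b) := by
      rw [← hsi _ h4]
      exact (hss _).symm
    rw [h5]; exact h4
  -- idempotents commute
  have comm : ∀ a b : S, a * a = a → b * b = b → a * b = b * a := by
    intro a b ha hb
    have hab := hmulidem a b ha hb
    have hba := hmulidem b a hb ha
    have h1 : (a*b)*(b*a)*(a*b) = a*b := by
      simp only [mul_assoc]
      rw [abs1 b b hb, abs1 a a ha]
      simpa [mul_assoc] using hab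
    have h2 : (b*a)*(a*b)*(b*a) = b*a := by
      simp only [mul_assoc]
      rw [abs1 a a ha, abs1 b b hb]
      simpa [mul_assoc] using hba
    have h3 : b*a = star (a*b) := huniq _ _ h1 h2
    rw [h3, hsi _ hab]
  -- s* s and s s* are idempotent
  have hts : (star s * s) * (star s * s) = star s * s := by
    have h := congrArg (· * s) (hinv' s)
    simpa [mul_assoc] using h
  have hst : (s * star s) * (s * star s) = s * star s := by
    have h := congrArg (· * star s) (hinv s)
    simpa [mul_assoc] using h
  -- φ(a) = s a s* is idempotent when a is an idempotent ≤ s*s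
  have hphiidem : ∀ a : S, a * a = a → a * (star s * s) = a →
      (s * a * star s) * (s * a * star s) = s * a * star s := by
    intro a ha hla
    simp only [mul_assoc]
    rw [absR a hla, abs1 a a ha]
  -- KEY: for every nonzero idempotent a ≤ s*s, a ≤ s a s*
  have key : ∀ a : S, a * a = a → a ≠ z → a * (star s * s) = a →
      a * (s * a * star s) = a := by
    intro a ha hanz hla
    by_contra hne
    have hkk : (s*a*star s)*(s*a*star s) = s*a*star s := hphiidem a ha hla
    have hcom := comm a (s*a*star s) ha hkk
    have hhnz : a * (s*a*star s) ≠ z := by rw [hcom]; exact hs a ha hanz hla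
    have hh : (a*(s*a*star s))*(a*(s*a*star s)) = a*(s*a*star s) := hmulidem a _ ha hkk
    have hhe : (a*(s*a*star s))*a = a*(s*a*star s) := by
      rw [mul_assoc, ← hcom, ← mul_assoc, ha]
    obtain ⟨e', he'i, he'nz, he'e, he'ne, hze'⟩ :=
      hdis (a*(s*a*star s)) a hh ha hhnz hhe hne
    have hle' : e' * (star s * s) = e' := by
      conv_lhs => rw [← he'e]
      rw [mul_assoc, hla, he'e]
    have h1 : a * e' = e' := (comm a e' ha he'i).trans he'e
    have hKe' : (s*a*star s) * e' = z := by
      calc (s*a*star s) * e' = (s*a*star s) * (a * e') := by rw [h1]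
        _ = ((s*a*star s) * a) * e' := (mul_assoc _ _ _).symm
        _ = (a * (s*a*star s)) * e' := by rw [hcom]
        _ = z := hze'
    have hphike' : (s*e'*star s) * (s*a*star s) = s*e'*star s := by
      simp only [mul_assoc]
      rw [absR e' hle', abs1 e' a he'e]
    apply hs e' he'i he'nz hle'
    calc s*e'*star s*e' = ((s*e'*star s) * (s*a*star s)) * e' := by rw [hphike']
      _ = (s*e'*star s) * ((s*a*star s) * e') := mul_assoc _ _ _
      _ = (s*e'*star s) * z := by rw [hKe']
      _ = z := (hz _).2
  -- main argument
  have hek : e * (s*e*star s) = e := key e he henz hle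
  by_contra hne0
  have hkk : (s*e*star s)*(s*e*star s) = s*e*star s := hphiidem e he hle
  have hne : e ≠ s*e*star s := fun h => hne0 h.symm
  obtain ⟨e2, he2i, he2nz, he2k, he2ne, hze2⟩ :=
    hdis e (s*e*star s) he hkk henz hek hne
  have hkst : (s*e*star s) * (s * star s) = s*e*star s := by
    simp only [mul_assoc]
    rw [absR e hle]
  have he2st : e2 * (s * star s) = e2 := by
    conv_lhs => rw [← he2k]
    rw [mul_assoc, hkst, he2k]
  have hwi : (star s*e2*s)*(star s*e2*s) = star s*e2*s := by
    simp only [mul_assoc]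
    rw [absL e2 he2st, abs1 e2 e2 he2i]
  have hwts : (star s*e2*s) * (star s * s) = star s*e2*s := by
    simp only [mul_assoc]
    rw [absL e2 he2st]
  have hphiw : s * (star s*e2*s) * star s = e2 := by
    simp only [mul_assoc]
    rw [he2st, ← mul_assoc, comm _ e2 hst he2i, he2st]
  have hwnz : star s*e2*s ≠ z := by
    intro h
    apply he2nz
    rw [← hphiw, h, (hz s).2, (hz (star s)).1]
  have hwe2 : (star s*e2*s) * e2 = star s*e2*s := by
    have h := key _ hwi hwnz hwts
    rwa [hphiw] at h
  have hpsik : star s * (s*e*star s) * s = e := by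
    simp only [mul_assoc]
    rw [hle, ← mul_assoc, comm _ e hts he, hle]
  have hwe : (star s*e2*s) * e = star s*e2*s := by
    have h2 : e2 * ((s*e*star s) * s) = e2 * s := by
      rw [← mul_assoc, he2k]
    calc (star s*e2*s) * e
        = (star s*e2*s) * (star s * (s*e*star s) * s) := by rw [hpsik]
      _ = star s * (e2 * (s * (star s * ((s*e*star s) * s)))) := by
          simp only [mul_assoc]
      _ = star s * (e2 * ((s*e*star s) * s)) := by rw [absL e2 he2st]
      _ = star s * (e2 * s) := by rw [h2]
      _ = star s * e2 * s := (mul_assoc _ _ _).symm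
  apply hwnz
  calc star s*e2*s = (star s*e2*s) * e := hwe.symm
    _ = ((star s*e2*s) * e2) * e := by rw [hwe2]
    _ = (star s*e2*s) * (e2 * e) := mul_assoc _ _ _
    _ = (star s*e2*s) * (e * e2) := by rw [comm e2 e he2i he]
    _ = (star s*e2*s) * z := by rw [hze2]
    _ = z := (hz _).2
end

section
/- Let S be a 0-disjunctive inverse semigroup with zero. Then S^iso equals the centralizer Z(S) = {s ∈ S : se = es for all idempotents e}. -/
section Helpers

variable {S : Type*} [Semigroup S]

private lemma extg {a b : S} (h : a = b) (y : S) : a * y = b * y := by rw [h]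

private lemma comm_idem {e f : S} (he : e * e = e) (hf : f * f = f) (h : e * f = f * e) :
    (e * f) * (e * f) = e * f := by
  rw [mul_assoc, ← mul_assoc f e f, ← h, mul_assoc e f f, hf, ← mul_assoc, he]

private lemma star_idem (star : S → S)
    (huniq : ∀ s t : S, s * t * s = s → t * s * t = t → t = star s)
    {e : S} (he : e * e = e) : star e = e :=
  (huniq e e (by rw [he, he]) (by rw [he, he])).symm

private lemma idem_mul_idem (star : S → S)
    (hinv : ∀ s : S, s * star s * s = s)
    (hinv' : ∀ s : S, star s * s * star s = star s)
    (huniq : ∀ s t : S, s * t * s = s → t * s * t = t → t = star s)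
    {e f : S} (he : e * e = e) (hf : f * f = f) : (e * f) * (e * f) = e * f := by
  have he' : ∀ y : S, e * (e * y) = e * y := fun y => by
    simpa only [mul_assoc] using extg he y
  have hf' : ∀ y : S, f * (f * y) = f * y := fun y => by
    simpa only [mul_assoc] using extg hf y
  have h1n : e * (f * (star (e * f) * (e * f))) = e * f := by
    simpa only [mul_assoc] using hinv (e * f)
  have h2e : ∀ y : S, star (e * f) * (e * (f * (star (e * f) * y))) = star (e * f) * y :=
    fun y => by simpa only [mul_assoc] using extg (hinv' (e * f)) y
  have hg : (f * star (e * f) * e) * (f * star (e * f) * e) = f * star (e * f) * e := by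
    simp only [mul_assoc]; rw [h2e]
  have hgg : (f * star (e * f) * e) * (e * f) * (f * star (e * f) * e) = f * star (e * f) * e := by
    simp only [mul_assoc]; rw [he', hf', h2e]
  have hgef : (e * f) * (f * star (e * f) * e) * (e * f) = e * f := by
    simp only [mul_assoc]; rw [hf', he', h1n]
  have hefg : e * f = f * star (e * f) * e :=
    (huniq _ _ hgg hgef).trans (star_idem star huniq hg)
  rw [hefg]; exact hg

private lemma idem_comm (star : S → S)
    (hinv : ∀ s : S, s * star s * s = s)
    (hinv' : ∀ s : S, star s * s * star s = star s)
    (huniq : ∀ s t : S, s * t * s = s → t * s * t = t → t = star s)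
    {e f : S} (he : e * e = e) (hf : f * f = f) : e * f = f * e := by
  have he' : ∀ y : S, e * (e * y) = e * y := fun y => by
    simpa only [mul_assoc] using extg he y
  have hf' : ∀ y : S, f * (f * y) = f * y := fun y => by
    simpa only [mul_assoc] using extg hf y
  have hefI := idem_mul_idem star hinv hinv' huniq he hf
  have hfeI := idem_mul_idem star hinv hinv' huniq hf he
  have hefIn : e * (f * (e * f)) = e * f := by simpa only [mul_assoc] using hefI
  have hfeIn : f * (e * (f * e)) = f * e := by simpa only [mul_assoc] using hfeI
  have h1 : (e * f) * (f * e) * (e * f) = e * f := by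
    simp only [mul_assoc]; rw [hf', he', hefIn]
  have h2 : (f * e) * (e * f) * (f * e) = f * e := by
    simp only [mul_assoc]; rw [he', hf', hfeIn]
  have h := huniq (e * f) (f * e) h1 h2
  rw [star_idem star huniq hefI] at h
  exact h.symm

private lemma star_mul (star : S → S)
    (hinv : ∀ s : S, s * star s * s = s)
    (hinv' : ∀ s : S, star s * s * star s = star s)
    (huniq : ∀ s t : S, s * t * s = s → t * s * t = t → t = star s)
    (a b : S) : star (a * b) = star b * star a := by
  have hFb : (b * star b) * (b * star b) = b * star b := by
    simp only [mul_assoc]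
    rw [show star b * (b * star b) = star b from by simpa only [mul_assoc] using hinv' b]
  have hEa : (star a * a) * (star a * a) = star a * a := by
    simp only [mul_assoc]
    rw [show a * (star a * a) = a from by simpa only [mul_assoc] using hinv a]
  have hpq := idem_comm star hinv hinv' huniq hFb hEa
  have hpq1 : ∀ y : S, b * (star b * (star a * (a * y))) = star a * (a * (b * (star b * y))) :=
    fun y => by simpa only [mul_assoc] using extg hpq y
  have hpq2 : ∀ y : S, star a * (a * (b * (star b * y))) = b * (star b * (star a * (a * y))) :=
    fun y => (hpq1 y).symm
  have hia : ∀ y : S, a * (star a * (a * y)) = a * y := fun y => by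
    simpa only [mul_assoc] using extg (hinv a) y
  have hib : ∀ y : S, star b * (b * (star b * y)) = star b * y := fun y => by
    simpa only [mul_assoc] using extg (hinv' b) y
  have h1 : (a * b) * (star b * star a) * (a * b) = a * b := by
    simp only [mul_assoc]
    rw [hpq1, hia, show b * (star b * b) = b from by simpa only [mul_assoc] using hinv b]
  have h2 : (star b * star a) * (a * b) * (star b * star a) = star b * star a := by
    simp only [mul_assoc]
    rw [hpq2, hib, show star a * (a * star a) = star a from by
      simpa only [mul_assoc] using hinv' a]
  exact (huniq _ _ h1 h2).symm

private lemma stepA (star : S → S) (z : S)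
    (hz : ∀ s : S, z * s = z ∧ s * z = z)
    (hinv : ∀ s : S, s * star s * s = s)
    (hinv' : ∀ s : S, star s * s * star s = star s)
    (huniq : ∀ s t : S, s * t * s = s → t * s * t = t → t = star s)
    (hdis : ∀ e f : S, e * e = e → f * f = f → e ≠ z → e * f = e → e ≠ f →
      ∃ e' : S, e' * e' = e' ∧ e' ≠ z ∧ e' * f = e' ∧ e' ≠ f ∧ e * e' = z)
    (s t : S) (hst : s * t * s = s) (hts : t * s * t = t)
    (hiso : ∀ f : S, f * f = f → f ≠ z → f * (t * s) = f → s * f * t * f ≠ z)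
    {e : S} (he : e * e = e) (hez : e ≠ z) (heE : e * (t * s) = e) :
    e * (s * e * t) = e := by
  have he' : ∀ y : S, e * (e * y) = e * y := fun y => by
    simpa only [mul_assoc] using extg he y
  have hstn : s * (t * s) = s := by simpa only [mul_assoc] using hst
  have hE : (t * s) * (t * s) = t * s := by simp only [mul_assoc]; rw [hstn]
  have hcomm := idem_comm star hinv hinv' huniq he hE
  have hEe : (t * s) * e = e := by rw [← hcomm]; exact heE
  have hEe' : ∀ y : S, t * (s * (e * y)) = e * y := fun y => by
    simpa only [mul_assoc] using extg hEe y
  have hg : (s * e * t) * (s * e * t) = s * e * t := by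
    simp only [mul_assoc]; rw [hEe', he']
  have hgcomm := idem_comm star hinv hinv' huniq he hg
  by_contra hne
  have hknz : e * (s * e * t) ≠ z := by rw [hgcomm]; exact hiso e he hez heE
  have hkid : (e * (s * e * t)) * (e * (s * e * t)) = e * (s * e * t) :=
    comm_idem he hg hgcomm
  have hke : (e * (s * e * t)) * e = e * (s * e * t) := by
    rw [mul_assoc, ← hgcomm, ← mul_assoc, he]
  obtain ⟨e', hi', hz', hee', hne', hke'⟩ := hdis (e * (s * e * t)) e hkid he hknz hke hne
  have he'' : ∀ y : S, e' * (e * y) = e' * y := fun y => by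
    simpa only [mul_assoc] using extg hee' y
  have he'E : e' * (t * s) = e' := by rw [← hee', mul_assoc, heE]
  have c1 : (s * e' * t) * (s * e * t) = s * e' * t := by
    simp only [mul_assoc]; rw [hEe', he'']
  have hee2 : e * e' = e' := (idem_comm star hinv hinv' huniq he hi').trans hee'
  have c2 : (s * e * t) * e' = z := by
    rw [← hee2, ← mul_assoc, ← hgcomm]; exact hke'
  have c3 : s * e' * t * e' = z := by
    conv_lhs => rw [← c1, mul_assoc (s * e' * t) (s * e * t) e', c2]
    exact (hz _).2
  exact hiso e' hi' hz' he'E c3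

private lemma conjLem (star : S → S) (z : S)
    (hz : ∀ s : S, z * s = z ∧ s * z = z)
    (hinv : ∀ s : S, s * star s * s = s)
    (hinv' : ∀ s : S, star s * s * star s = star s)
    (huniq : ∀ s t : S, s * t * s = s → t * s * t = t → t = star s)
    (hdis : ∀ e f : S, e * e = e → f * f = f → e ≠ z → e * f = e → e ≠ f →
      ∃ e' : S, e' * e' = e' ∧ e' ≠ z ∧ e' * f = e' ∧ e' ≠ f ∧ e * e' = z)
    (s t : S) (hst : s * t * s = s) (hts : t * s * t = t)
    (hisoS : ∀ f : S, f * f = f → f ≠ z → f * (t * s) = f → s * f * t * f ≠ z)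
    (hisoT : ∀ f : S, f * f = f → f ≠ z → f * (s * t) = f → t * f * s * f ≠ z)
    {e : S} (he : e * e = e) (hez : e ≠ z) (heE : e * (t * s) = e) :
    s * e * t = e := by
  have hstn : s * (t * s) = s := by simpa only [mul_assoc] using hst
  have htsn : t * (s * t) = t := by simpa only [mul_assoc] using hts
  have hE : (t * s) * (t * s) = t * s := by simp only [mul_assoc]; rw [hstn]
  have hcomm := idem_comm star hinv hinv' huniq he hE
  have hEe : (t * s) * e = e := by rw [← hcomm]; exact heE
  have hEen : t * (s * e) = e := by simpa only [mul_assoc] using hEe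
  have hEe' : ∀ y : S, t * (s * (e * y)) = e * y := fun y => by
    simpa only [mul_assoc] using extg hEe y
  have he' : ∀ y : S, e * (e * y) = e * y := fun y => by
    simpa only [mul_assoc] using extg he y
  have A1 := stepA star z hz hinv hinv' huniq hdis s t hst hts hisoS he hez heE
  have hg : (s * e * t) * (s * e * t) = s * e * t := by
    simp only [mul_assoc]; rw [hEe', he']
  have hgz : s * e * t ≠ z := by
    intro h; apply hez; rw [← A1, h]; exact (hz e).2
  have hgE : (s * e * t) * (s * t) = s * e * t := by
    simp only [mul_assoc]; rw [htsn]
  have A2 := stepA star z hz hinv hinv' huniq hdis t s hts hst hisoT hg hgz hgE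
  have d1 : t * (s * e * t) * s = e := by
    simp only [mul_assoc]; rw [heE]; exact hEen
  rw [d1] at A2
  have hgcomm := idem_comm star hinv hinv' huniq he hg
  exact (A2.symm.trans hgcomm.symm).trans A1

private lemma isoT (star : S → S) (z : S)
    (hz : ∀ s : S, z * s = z ∧ s * z = z)
    (hinv : ∀ s : S, s * star s * s = s)
    (hinv' : ∀ s : S, star s * s * star s = star s)
    (huniq : ∀ s t : S, s * t * s = s → t * s * t = t → t = star s)
    (hdis : ∀ e f : S, e * e = e → f * f = f → e ≠ z → e * f = e → e ≠ f →
      ∃ e' : S, e' * e' = e' ∧ e' ≠ z ∧ e' * f = e' ∧ e' ≠ f ∧ e * e' = z)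
    (s t : S) (hst : s * t * s = s) (hts : t * s * t = t)
    (hisoS : ∀ f : S, f * f = f → f ≠ z → f * (t * s) = f → s * f * t * f ≠ z) :
    ∀ f : S, f * f = f → f ≠ z → f * (s * t) = f → t * f * s * f ≠ z := by
  intro f hf hfz hfF
  have hstn : s * (t * s) = s := by simpa only [mul_assoc] using hst
  have htsn : t * (s * t) = t := by simpa only [mul_assoc] using hts
  have hf' : ∀ y : S, f * (f * y) = f * y := fun y => by
    simpa only [mul_assoc] using extg hf y
  have hF : (s * t) * (s * t) = s * t := by simp only [mul_assoc]; rw [htsn]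
  have hFf : (s * t) * f = f := by
    rw [← idem_comm star hinv hinv' huniq hf hF]; exact hfF
  have hFfn : s * (t * f) = f := by simpa only [mul_assoc] using hFf
  have hFf' : ∀ y : S, s * (t * (f * y)) = f * y := fun y => by
    simpa only [mul_assoc] using extg hFf y
  have heI : (t * f * s) * (t * f * s) = t * f * s := by
    simp only [mul_assoc]; rw [hFf', hf']
  have heE : (t * f * s) * (t * s) = t * f * s := by
    simp only [mul_assoc]; rw [hstn]
  have hse : s * (t * f * s) * t = f := by
    simp only [mul_assoc]; rw [hfF]; exact hFfn
  have hez : t * f * s ≠ z := by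
    intro h; apply hfz
    rw [← hse, h, show s * z = z from (hz s).2]
    exact (hz t).1
  have A1 := stepA star z hz hinv hinv' huniq hdis s t hst hts hisoS heI hez heE
  rw [hse] at A1
  rw [A1]
  exact hez

end Helpers

/-- In a 0-disjunctive inverse semigroup with zero, `S^iso` equals
the centralizer `Z(S) = {s : se = es for all idempotents e}`. -/
theorem stmt6 {S : Type*} [Semigroup S] (star : S → S) (z : S)
    (hz : ∀ s : S, z * s = z ∧ s * z = z)
    (hinv : ∀ s : S, s * star s * s = s)
    (hinv' : ∀ s : S, star s * s * star s = star s)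
    (huniq : ∀ s t : S, s * t * s = s → t * s * t = t → t = star s)
    (hdis : ∀ e f : S, e * e = e → f * f = f → e ≠ z → e * f = e → e ≠ f →
      ∃ e' : S, e' * e' = e' ∧ e' ≠ z ∧ e' * f = e' ∧ e' ≠ f ∧ e * e' = z) :
    ∀ s : S,
      (∀ f : S, f * f = f → f ≠ z → f * (star s * s) = f →
        s * f * star s * f ≠ z) ↔
      (∀ e : S, e * e = e → s * e = e * s) := by
  intro s
  constructor
  · intro hiso e he
    have hisoT := isoT star z hz hinv hinv' huniq hdis s (star s) (hinv s) (hinv' s) hiso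
    by_cases hEz : star s * s = z
    · have hsz : s = z := by
        conv_lhs => rw [← hinv s]
        rw [mul_assoc, hEz]
        exact (hz s).2
      rw [hsz]
      exact ((hz e).1).trans ((hz e).2).symm
    · have hE : (star s * s) * (star s * s) = star s * s := by
        simp only [mul_assoc]
        rw [show s * (star s * s) = s from by simpa only [mul_assoc] using hinv s]
      have conj : ∀ e₀ : S, e₀ * e₀ = e₀ → e₀ ≠ z → e₀ * (star s * s) = e₀ →
          s * e₀ * star s = e₀ :=
        fun e₀ h1 h2 h3 =>
          conjLem star z hz hinv hinv' huniq hdis s (star s) (hinv s) (hinv' s)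
            hiso hisoT h1 h2 h3
      have hEF : s * star s = star s * s := by
        have h := conj (star s * s) hE hEz hE
        have h2 : s * (star s * s) * star s = s * star s := by
          rw [← mul_assoc, hinv s]
        exact h2.symm.trans h
      have hcomm_eE := idem_comm star hinv hinv' huniq he hE
      by_cases h0 : (star s * s) * e = z
      · have h1 : (s * (star s * s)) * e = s * e := by
          rw [show s * (star s * s) = s from by rw [← mul_assoc, hinv s]]
        have h2 : (s * (star s * s)) * e = z := by
          rw [mul_assoc, h0]; exact (hz s).2
        have h3 : e * ((s * star s) * s) = e * s := by rw [hinv s]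
        have h4 : e * ((s * star s) * s) = z := by
          rw [← mul_assoc, hEF, hcomm_eE, h0]; exact (hz s).1
        exact (h1.symm.trans h2).trans (h3.symm.trans h4).symm
      · have he₀ : ((star s * s) * e) * ((star s * s) * e) = (star s * s) * e :=
          comm_idem hE he hcomm_eE.symm
        have he₀E : ((star s * s) * e) * (star s * s) = (star s * s) * e := by
          rw [mul_assoc, hcomm_eE, ← mul_assoc, hE]
        have hc := conj ((star s * s) * e) he₀ h0 he₀E
        have hc2 : s * ((star s * s) * e) * star s * s = ((star s * s) * e) * s := by
          rw [hc]
        have hc3 : s * ((star s * s) * e) * star s * s = s * ((star s * s) * e) := by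
          rw [mul_assoc (s * ((star s * s) * e)) (star s) s,
            mul_assoc s ((star s * s) * e) (star s * s), he₀E]
        have hse₀ : s * ((star s * s) * e) = ((star s * s) * e) * s := hc3.symm.trans hc2
        have u1 : s * ((star s * s) * e) = s * e := by
          rw [← mul_assoc, ← mul_assoc, hinv s]
        have hF : (s * star s) * (s * star s) = s * star s := by
          simp only [mul_assoc]
          rw [show star s * (s * star s) = star s from by
            simpa only [mul_assoc] using hinv' s]
        have u2 : ((star s * s) * e) * s = e * s := by
          rw [← hEF, ← idem_comm star hinv hinv' huniq he hF,
            mul_assoc e (s * star s) s, hinv s]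
        exact u1.symm.trans (hse₀.trans u2)
  · intro hcomm f hf hfz hfE
    have hsf := hcomm f hf
    have hfstar : star f = f := star_idem star huniq hf
    have h1' : star (s * f) = f * star s := by
      rw [star_mul star hinv hinv' huniq s f, hfstar]
    have h2' : star (f * s) = star s * f := by
      rw [star_mul star hinv hinv' huniq f s, hfstar]
    have hstf : f * star s = star s * f := h1'.symm.trans ((congrArg star hsf).trans h2')
    have key : s * f * star s * f = (s * star s) * f := by
      rw [mul_assoc s f (star s), hstf, ← mul_assoc s (star s) f,
        mul_assoc (s * star s) f f, hf]
    rw [key]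
    intro hcon
    have hfs0 : s * f = z := by
      calc s * f = ((s * star s) * s) * f := by rw [hinv s]
        _ = (s * star s) * (s * f) := by rw [mul_assoc (s * star s) s f]
        _ = (s * star s) * (f * s) := by rw [hsf]
        _ = ((s * star s) * f) * s := by rw [mul_assoc (s * star s) f s]
        _ = z * s := by rw [hcon]
        _ = z := (hz s).1
    apply hfz
    calc f = f * (star s * s) := hfE.symm
      _ = (f * star s) * s := by rw [← mul_assoc f (star s) s]
      _ = (star s * f) * s := by rw [hstf]
      _ = star s * (f * s) := by rw [mul_assoc]
      _ = star s * (s * f) := by rw [← hsf]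
      _ = star s * z := by rw [hfs0]
      _ = z := (hz _).2
end

section
/- Let S be an inverse semigroup, s ∈ S, and suppose e ≤ s*s is weakly fixed by s. Then, setting t = se, the idempotent t*t equals e and is weakly fixed by t. -/
/-- If `e ≤ s*s` is weakly fixed by `s` and `t = se`, then
`t*t = e` and `e` is weakly fixed by `t`. -/
theorem stmt8 {S : Type*} [Semigroup S] (star : S → S) (z : S)
    (hz : ∀ s : S, z * s = z ∧ s * z = z)
    (hinv : ∀ s : S, s * star s * s = s)
    (hinv' : ∀ s : S, star s * s * star s = star s)
    (huniq : ∀ s t : S, s * t * s = s → t * s * t = t → t = star s)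
    (s e : S) (he : e * e = e) (hle : e * (star s * s) = e)
    (hwf : ∀ f : S, f * f = f → f ≠ z → f * e = f → s * f * star s * f ≠ z) :
    star (s * e) * (s * e) = e ∧
      (∀ f : S, f * f = f → f ≠ z → f * e = f →
        (s * e) * f * star (s * e) * f ≠ z) := by
  -- star of an idempotent is itself
  have hstar_idem : ∀ a : S, a * a = a → star a = a := by
    intro a ha
    exact (huniq a a (by rw [ha, ha]) (by rw [ha, ha])).symm
  -- star is involutive
  have hstar2 : ∀ a : S, star (star a) = a := by
    intro a
    exact (huniq (star a) a (hinv' a) (hinv a)).symm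
  -- product of idempotents is idempotent
  have hprod : ∀ a b : S, a * a = a → b * b = b → (a * b) * (a * b) = a * b := by
    intro a b ha hb
    have h1 : (a * b) * (b * star (a * b) * a) * (a * b) = a * b := by
      have h : a * b * (b * star (a * b) * a) * (a * b)
          = a * ((b * b) * (star (a * b) * ((a * a) * b))) := by
        simp only [mul_assoc]
      rw [h, ha, hb]
      have h' : a * (b * (star (a * b) * (a * b))) = a * b * star (a * b) * (a * b) := by
        simp only [mul_assoc]
      rw [h']
      exact hinv (a * b)
    have h2 : (b * star (a * b) * a) * (a * b) * (b * star (a * b) * a)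
        = b * star (a * b) * a := by
      have h : (b * star (a * b) * a) * (a * b) * (b * star (a * b) * a)
          = b * (star (a * b) * ((a * a) * ((b * b) * (star (a * b) * a)))) := by
        simp only [mul_assoc]
      rw [h, ha, hb]
      have h' : b * (star (a * b) * (a * (b * (star (a * b) * a))))
          = b * (star (a * b) * (a * b) * star (a * b)) * a := by
        simp only [mul_assoc]
      rw [h', hinv' (a * b)]
    have hw : b * star (a * b) * a = star (a * b) :=
      huniq (a * b) (b * star (a * b) * a) h1 h2
    have hwid : (b * star (a * b) * a) * (b * star (a * b) * a)
        = b * star (a * b) * a := by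
      have h : (b * star (a * b) * a) * (b * star (a * b) * a)
          = b * (star (a * b) * (a * b) * star (a * b)) * a := by
        simp only [mul_assoc]
      rw [h, hinv' (a * b)]
    have hab : a * b = b * star (a * b) * a := by
      rw [hw, ← hstar_idem (star (a * b)) (hw ▸ hwid), hstar2]
    rw [hab]; exact hwid
  -- idempotents commute
  have hcomm : ∀ a b : S, a * a = a → b * b = b → a * b = b * a := by
    intro a b ha hb
    have hab := hprod a b ha hb
    have hba := hprod b a hb ha
    have h1 : (a * b) * (b * a) * (a * b) = a * b := by
      have : (a * b) * (b * a) * (a * b) = a * ((b * b) * (a * a)) * b := by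
        simp only [mul_assoc]
      rw [this, ha, hb]
      have : a * (b * a) * b = (a * b) * (a * b) := by simp only [mul_assoc]
      rw [this, hab]
    have h2 : (b * a) * (a * b) * (b * a) = b * a := by
      have : (b * a) * (a * b) * (b * a) = b * ((a * a) * (b * b)) * a := by
        simp only [mul_assoc]
      rw [this, ha, hb]
      have : b * (a * b) * a = (b * a) * (b * a) := by simp only [mul_assoc]
      rw [this, hba]
    have := huniq (a * b) (b * a) h1 h2
    rw [this, hstar_idem (a * b) hab]
  have hssid : (star s * s) * (star s * s) = star s * s := by
    have : (star s * s) * (star s * s) = (star s * s * star s) * s := by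
      simp only [mul_assoc]
    rw [this, hinv' s]
  -- (star s * s) * e = e
  have hle' : (star s * s) * e = e := by
    rw [← hcomm e (star s * s) he hssid, hle]
  -- star (s * e) = e * star s
  have hstarse : star (s * e) = e * star s := by
    refine (huniq (s * e) (e * star s) ?_ ?_).symm
    · have : s * e * (e * star s) * (s * e) = s * ((e * e) * (star s * s)) * e := by
        simp only [mul_assoc]
      rw [this, he, hle, mul_assoc, he]
    · have : e * star s * (s * e) * (e * star s) = e * ((star s * s) * (e * e)) * star s := by
        simp only [mul_assoc]
      rw [this, he, hle', he]
  constructor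
  · rw [hstarse]
    have : e * star s * (s * e) = e * (star s * s) * e := by simp only [mul_assoc]
    rw [this, hle, he]
  · intro f hf hfz hfe
    have hef : e * f = f := by rw [hcomm e f he hf, hfe]
    have key : (s * e) * f * star (s * e) * f = s * f * star s * f := by
      rw [hstarse]
      have h1 : s * e * f = s * f := by rw [mul_assoc, hef]
      rw [h1]
      have h2 : s * f * (e * star s) = s * (f * e) * star s := by simp only [mul_assoc]
      rw [h2, hfe]
    rw [key]
    exact hwf f hf hfz hfe
end

section
/- Let P be a right LCM monoid and p, q ∈ P. If pq ∈ P_c then both p ∈ P_c and q ∈ P_c. -/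
/-- The principal right ideal `pP`. -/
def rIdeal {P : Type*} [Monoid P] (p : P) : Set P := Set.range fun x => p * x

/-- The core: elements whose principal right ideal meets every principal right ideal. -/
def IsCore {P : Type*} [Monoid P] (p : P) : Prop :=
  ∀ q : P, (rIdeal p ∩ rIdeal q).Nonempty

/-- In a right LCM monoid, `pq ∈ P_c` implies `p ∈ P_c` and `q ∈ P_c`. -/
theorem stmt10 {P : Type*} [Monoid P]
    (hlc : ∀ a b c : P, a * b = a * c → b = c)
    (hlcm : ∀ p q : P, rIdeal p ∩ rIdeal q = ∅ ∨
      ∃ r : P, rIdeal p ∩ rIdeal q = rIdeal r)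
    (p q : P) (h : IsCore (p * q)) :
    IsCore p ∧ IsCore q := by
  constructor
  · intro r
    obtain ⟨x, ⟨a, ha⟩, hx⟩ := h r
    exact ⟨x, ⟨q * a, by simpa [mul_assoc] using ha⟩, hx⟩
  · intro r
    obtain ⟨x, ⟨a, ha⟩, ⟨b, hb⟩⟩ := h (p * r)
    refine ⟨q * a, ⟨a, rfl⟩, b, hlc p _ _ ?_⟩
    have : p * r * b = p * q * a := hb.trans ha.symm
    simpa [mul_assoc] using this
end

section
/- Let P be a right LCM monoid and p, q ∈ P_c with pP ∩ qP = rP. Then r ∈ P_c. -/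
/-- In a right LCM monoid, if `p, q ∈ P_c` and `pP ∩ qP = rP`,
then `r ∈ P_c`. -/
theorem stmt11 {P : Type*} [Monoid P]
    (hlc : ∀ a b c : P, a * b = a * c → b = c)
    (hlcm : ∀ p q : P, rIdeal p ∩ rIdeal q = ∅ ∨
      ∃ r : P, rIdeal p ∩ rIdeal q = rIdeal r)
    (p q r : P) (hp : IsCore p) (hq : IsCore q)
    (hr : rIdeal p ∩ rIdeal q = rIdeal r) :
    IsCore r := by
  intro t
  rcases hlcm p t with he | ⟨s, hs⟩
  · exact absurd (he ▸ hp t) Set.not_nonempty_empty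
  · obtain ⟨x, hxq, hxs⟩ := hq s
    have hx : x ∈ rIdeal p ∩ rIdeal t := hs ▸ hxs
    have hxr : x ∈ rIdeal r := hr ▸ ⟨hx.1, hxq⟩
    exact ⟨x, hxr, hx.2⟩
end

section
/- Let 𝒜 be a finite alphabet, X ⊆ 𝒜^ℕ a subshift, and for words α with C(α,ε) = {x ∈ X : αx ∈ X} nonempty define s_α ∈ I(X), s_α(x) = αx on domain C(α,ε). If s = s_α ∘ e ∘ s_β* is a partial bijection of X, where e is the identity on a subset of X, and |α| > |β|, and s fixes a point βx (i.e., s(βx) = βx), then α = βγ for some word γ and x = γ^∞ (the periodic infinite repetition of γ). Consequently such s fixes at most one point. -/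
/-- Concatenation of a finite word with a one-sided infinite sequence. -/
def appendSeq {A : Type*} (w : List A) (x : ℕ → A) : ℕ → A :=
  fun n => if h : n < w.length then w.get ⟨n, h⟩ else x (n - w.length)

lemma appendSeq_shift {A : Type*} (w : List A) (x : ℕ → A) (n : ℕ) :
    appendSeq w x (n + w.length) = x n := by
  unfold appendSeq
  rw [dif_neg (by omega)]
  congr 1; omega

lemma appendSeq_append {A : Type*} (u v : List A) (x : ℕ → A) :
    appendSeq (u ++ v) x = appendSeq u (appendSeq v x) := by
  funext n
  unfold appendSeq
  by_cases h : n < u.length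
  · rw [dif_pos (by simp; omega), dif_pos h]
    simp [List.getElem_append_left h]
  · by_cases h2 : n < u.length + v.length
    · rw [dif_pos (by simp; omega), dif_neg h, dif_pos (by omega)]
      simp [List.getElem_append_right (le_of_not_gt h)]
    · rw [dif_neg (by simp; omega), dif_neg h, dif_neg (by omega)]
      congr 1; simp only [List.length_append]; omega

lemma fix_periodic {A : Type*} (γ : List A) (z : ℕ → A) (hd : 0 < γ.length)
    (hz : appendSeq γ z = z) (n : ℕ) :
    z n = γ.get ⟨n % γ.length, Nat.mod_lt _ hd⟩ := by
  induction n using Nat.strong_induction_on with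
  | _ n ih =>
    by_cases h : n < γ.length
    · conv_lhs => rw [← hz]
      unfold appendSeq
      rw [dif_pos h]
      congr 1
      exact Fin.ext (Nat.mod_eq_of_lt h).symm
    · have := ih (n - γ.length) (by omega)
      conv_lhs => rw [← hz]
      unfold appendSeq
      rw [dif_neg h, this]
      congr 1
      exact Fin.ext (Nat.mod_eq_sub_mod (le_of_not_gt h)).symm

/-- Let `X ⊆ 𝒜^ℕ` be a subshift and `s = s_α ∘ e ∘ s_β*` with
`|α| > |β|`.  If `s` fixes the point `βx` (i.e. `αx = βx` with `αx ∈ X`), then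
`α = βγ` for some word `γ` with `x = γ^∞` (equivalently `γx = x`); consequently
`s` fixes at most one point. -/
theorem stmt14 {A : Type*} [Fintype A] [TopologicalSpace A] [DiscreteTopology A]
    (X : Set (ℕ → A)) (hX : IsClosed X)
    (hshift : ∀ x ∈ X, (fun n => x (n + 1)) ∈ X)
    (α β : List A) (x : ℕ → A)
    (hlen : β.length < α.length)
    (hβx : appendSeq β x ∈ X) (hαx : appendSeq α x ∈ X)
    (hfix : appendSeq α x = appendSeq β x) :
    (∃ γ : List A, α = β ++ γ ∧ appendSeq γ x = x) ∧
      (∀ y : ℕ → A, appendSeq β y ∈ X → appendSeq α y ∈ X →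
        appendSeq α y = appendSeq β y → y = x) := by
  have hpre : α.take β.length = β := by
    apply List.ext_getElem
    · simp; omega
    · intro n h1 h2
      have := congrFun hfix n
      unfold appendSeq at this
      rw [dif_pos (by omega), dif_pos (by simpa using h2)] at this
      simpa [List.getElem_take] using this
  set γ := α.drop β.length with hγ
  have hαβγ : α = β ++ γ := by
    conv_lhs => rw [← List.take_append_drop β.length α, hpre]
  have hdγ : 0 < γ.length := by simp [hγ]; omega
  have key : ∀ z : ℕ → A, appendSeq α z = appendSeq β z → appendSeq γ z = z := by
    intro z hz
    rw [hαβγ, appendSeq_append] at hz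
    funext n
    have := congrFun hz (n + β.length)
    rwa [appendSeq_shift, appendSeq_shift] at this
  have hx := key x hfix
  refine ⟨⟨γ, hαβγ, hx⟩, ?_⟩
  intro y _ _ hy
  have hy' := key y hy
  funext n
  rw [fix_periodic γ y hdγ hy' n, fix_periodic γ x hdγ hx n]
end

section
/- Let P be a right LCM monoid, and define S = {[p,q] : p,q ∈ P} ∪ {0}, where [p,q] is the equivalence class of (p,q) under (p,q) ∼ (pu, qu) for units u ∈ U(P), with product [p,q][r,t] = [pq', tr'] when qP ∩ rP = ℓP with qq' = rr' = ℓ, and 0 when qP ∩ rP = ∅. Then S is an inverse semigroup with [p,q]* = [q,p], and its idempotents are exactly {[p,p] : p ∈ P} ∪ {0}. -/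
/-- The relation `(p,q) ∼ (a,b)` iff there is a unit `u` with `pu = a`, `qu = b`. -/
def lcmRel (P : Type*) [Monoid P] : P × P → P × P → Prop :=
  fun a b => ∃ u : P, IsUnit u ∧ a.1 * u = b.1 ∧ a.2 * u = b.2

/-- The underlying set `S = {[p,q] : p,q ∈ P} ∪ {0}`. -/
abbrev LCMS (P : Type*) [Monoid P] := WithZero (Quot (lcmRel P))

/-- The class `[p,q]` as an element of `S`. -/
def cls {P : Type*} [Monoid P] (p q : P) : LCMS P :=
  ((Quot.mk (lcmRel P) (p, q) : Quot (lcmRel P)) : WithZero (Quot (lcmRel P)))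

namespace Stmt19

variable {P : Type*} [Monoid P]

theorem self_mem (p : P) : p ∈ rIdeal p := ⟨1, mul_one p⟩

theorem mul_mem (p x : P) : p * x ∈ rIdeal p := ⟨x, rfl⟩

theorem rIdeal_mul_subset (p q : P) : rIdeal (p * q) ⊆ rIdeal p := by
  rintro a ⟨x, rfl⟩
  exact ⟨q * x, (mul_assoc p q x).symm⟩

theorem rIdeal_mul_eq_image (p q : P) :
    rIdeal (p * q) = (fun x => p * x) '' rIdeal q := by
  ext a
  constructor
  · rintro ⟨x, rfl⟩
    exact ⟨q * x, ⟨x, rfl⟩, (mul_assoc p q x).symm⟩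
  · rintro ⟨b, ⟨x, rfl⟩, rfl⟩
    exact ⟨x, mul_assoc p q x⟩

theorem lcmRel_equiv : Equivalence (lcmRel P) := by
  constructor
  · intro a; exact ⟨1, isUnit_one, mul_one _, mul_one _⟩
  · rintro a b ⟨u, hu, h1, h2⟩
    obtain ⟨w, rfl⟩ := hu
    refine ⟨↑w⁻¹, Units.isUnit _, ?_, ?_⟩
    · rw [← h1, mul_assoc, Units.mul_inv, mul_one]
    · rw [← h2, mul_assoc, Units.mul_inv, mul_one]
  · rintro a b c ⟨u, hu, h1, h2⟩ ⟨v, hv, h3, h4⟩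
    exact ⟨u * v, hu.mul hv, by rw [← mul_assoc, h1, h3], by rw [← mul_assoc, h2, h4]⟩

theorem cls_eq_iff {p q p' q' : P} :
    cls p q = cls p' q' ↔ lcmRel P (p, q) (p', q') := by
  unfold cls
  rw [WithZero.coe_inj, Quot.eq, Equivalence.eqvGen_iff lcmRel_equiv]

theorem cls_ne_zero (p q : P) : cls p q ≠ 0 := WithZero.coe_ne_zero

/-- If `a` and `b` divide each other, they differ by a unit. -/
theorem exists_unit (hlc : ∀ a b c : P, a * b = a * c → b = c) {a b : P}
    (hab : a ∈ rIdeal b) (hba : b ∈ rIdeal a) : ∃ u, IsUnit u ∧ a * u = b := by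
  obtain ⟨x, hx'⟩ := hba
  obtain ⟨y, hy'⟩ := hab
  have hx : a * x = b := hx'
  have hy : b * y = a := hy'
  have h1 : x * y = 1 := hlc a _ _ (by rw [← mul_assoc, hx, hy, mul_one])
  have h2 : y * x = 1 := hlc b _ _ (by rw [← mul_assoc, hy, hx, mul_one])
  exact ⟨x, ⟨⟨x, y, h1, h2⟩, rfl⟩, hx⟩

theorem rIdeal_eq_iff (hlc : ∀ a b c : P, a * b = a * c → b = c) {a b : P} :
    rIdeal a = rIdeal b ↔ ∃ u, IsUnit u ∧ a * u = b := by
  constructor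
  · intro h
    exact exists_unit hlc (h ▸ self_mem a) (h ▸ self_mem b)
  · rintro ⟨u, hu, rfl⟩
    obtain ⟨w, rfl⟩ := hu
    refine Set.Subset.antisymm ?_ (rIdeal_mul_subset a _)
    rintro _ ⟨x, rfl⟩
    exact ⟨↑w⁻¹ * x, show a * ↑w * (↑w⁻¹ * x) = a * x by
      rw [mul_assoc, ← mul_assoc (w : P), Units.mul_inv, one_mul]⟩

def mulCond (q r : P) : Prop :=
  ∃ c : P × P, q * c.1 = r * c.2 ∧ rIdeal q ∩ rIdeal r = rIdeal (q * c.1)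

open Classical in
noncomputable def mulFun (a b : P × P) : LCMS P :=
  if h : mulCond a.2 b.1 then cls (a.1 * h.choose.1) (b.2 * h.choose.2) else 0

theorem not_mulCond {q r : P} (h : rIdeal q ∩ rIdeal r = ∅) : ¬ mulCond q r := by
  rintro ⟨c, hc1, hc2⟩
  have hm : q * c.1 ∈ rIdeal q ∩ rIdeal r := ⟨mul_mem _ _, ⟨c.2, hc1.symm⟩⟩
  rw [h] at hm
  exact hm

theorem mulFun_empty {p q r t : P} (h : rIdeal q ∩ rIdeal r = ∅) :
    mulFun (p, q) (r, t) = 0 := by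
  rw [mulFun, dif_neg (not_mulCond h)]

theorem mulFun_spec (hlc : ∀ a b c : P, a * b = a * c → b = c) {p q r t q' r' : P}
    (h1 : q * q' = r * r') (h2 : rIdeal q ∩ rIdeal r = rIdeal (q * q')) :
    mulFun (p, q) (r, t) = cls (p * q') (t * r') := by
  have hcond : mulCond q r := ⟨(q', r'), h1, h2⟩
  rw [mulFun, dif_pos hcond]
  obtain ⟨hc1, hc2⟩ := hcond.choose_spec
  have hee : rIdeal (q * q') = rIdeal (q * hcond.choose.1) := h2.symm.trans hc2
  obtain ⟨u, hu, huv⟩ := (rIdeal_eq_iff hlc).1 hee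
  have hq : q' * u = hcond.choose.1 := hlc q _ _ (by rw [← mul_assoc]; exact huv)
  have hr : r' * u = hcond.choose.2 := hlc r _ _ (by
    rw [← mul_assoc, ← h1, huv]; exact hc1)
  exact (cls_eq_iff.2 ⟨u, hu, by rw [mul_assoc, hq], by rw [mul_assoc, hr]⟩).symm

theorem sound_right (hlc : ∀ a b c : P, a * b = a * c → b = c) :
    ∀ (a b₁ b₂ : P × P), lcmRel P b₁ b₂ → mulFun a b₁ = mulFun a b₂ := by
  rintro ⟨p, q⟩ ⟨r, t⟩ ⟨r2, t2⟩ ⟨u, hu, h1, h2⟩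
  subst h1; subst h2
  obtain ⟨w, rfl⟩ := hu
  set u : P := ↑w with hwu
  have hu : IsUnit u := w.isUnit
  have hid : rIdeal r = rIdeal (r * u) := (rIdeal_eq_iff hlc).2 ⟨u, hu, rfl⟩
  by_cases hc : mulCond q r
  · obtain ⟨c, hc1, hc2⟩ := hc
    rw [mulFun_spec hlc hc1 hc2]
    have he : (r * u) * (↑w⁻¹ * c.2) = r * c.2 := by
      rw [mul_assoc, ← mul_assoc u, hwu, Units.mul_inv, one_mul]
    rw [mulFun_spec hlc (q' := c.1) (r' := ↑w⁻¹ * c.2) (by rw [he]; exact hc1)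
      (by rw [← hid]; exact hc2)]
    have he2 : (t * u) * (↑w⁻¹ * c.2) = t * c.2 := by
      rw [mul_assoc, ← mul_assoc u, hwu, Units.mul_inv, one_mul]
    rw [he2]
  · have hc2 : ¬ mulCond q (r * u) := by
      rintro ⟨c, hc1, hc2⟩
      exact hc ⟨(c.1, u * c.2), by rw [hc1, mul_assoc], by rw [← hid] at hc2; exact hc2⟩
    rw [mulFun, dif_neg hc, mulFun, dif_neg hc2]

theorem sound_left (hlc : ∀ a b c : P, a * b = a * c → b = c) :
    ∀ (a₁ a₂ b : P × P), lcmRel P a₁ a₂ → mulFun a₁ b = mulFun a₂ b := by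
  rintro ⟨p, q⟩ ⟨p2, q2⟩ ⟨r, t⟩ ⟨u, hu, h1, h2⟩
  subst h1; subst h2
  obtain ⟨w, rfl⟩ := hu
  set u : P := ↑w with hwu
  have hu : IsUnit u := w.isUnit
  have hid : rIdeal q = rIdeal (q * u) := (rIdeal_eq_iff hlc).2 ⟨u, hu, rfl⟩
  by_cases hc : mulCond q r
  · obtain ⟨c, hc1, hc2⟩ := hc
    rw [mulFun_spec hlc hc1 hc2]
    have he : (q * u) * (↑w⁻¹ * c.1) = q * c.1 := by
      rw [mul_assoc, ← mul_assoc u, hwu, Units.mul_inv, one_mul]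
    rw [mulFun_spec hlc (q' := ↑w⁻¹ * c.1) (r' := c.2) (by rw [he]; exact hc1)
      (by rw [he, ← hid]; exact hc2)]
    have he2 : (p * u) * (↑w⁻¹ * c.1) = p * c.1 := by
      rw [mul_assoc, ← mul_assoc u, hwu, Units.mul_inv, one_mul]
    rw [he2]
  · have hc2 : ¬ mulCond (q * u) r := by
      rintro ⟨c, hc1, hc2⟩
      refine hc ⟨(u * c.1, c.2), by rw [← mul_assoc]; exact hc1, ?_⟩
      rw [← mul_assoc, ← hc2, hid]
    rw [mulFun, dif_neg hc, mulFun, dif_neg hc2]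

noncomputable def lmul (hlc : ∀ a b c : P, a * b = a * c → b = c) :
    LCMS P → LCMS P → LCMS P :=
  fun a b =>
    Option.casesOn a 0 fun x =>
      Option.casesOn b 0 fun y =>
        Quot.lift₂ mulFun (sound_right hlc) (sound_left hlc) x y

theorem lmul_zero_left (hlc : ∀ a b c : P, a * b = a * c → b = c) (s : LCMS P) :
    lmul hlc 0 s = 0 := rfl

theorem lmul_zero_right (hlc : ∀ a b c : P, a * b = a * c → b = c) (s : LCMS P) :
    lmul hlc s 0 = 0 := by
  cases s <;> rfl

theorem lmul_cls (hlc : ∀ a b c : P, a * b = a * c → b = c) (p q r t : P) :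
    lmul hlc (cls p q) (cls r t) = mulFun (p, q) (r, t) := rfl

def lstar : LCMS P → LCMS P :=
  fun a => Option.casesOn a 0 fun x =>
    Quot.lift (fun y : P × P => cls y.2 y.1)
      (fun a b h => cls_eq_iff.2 ⟨h.choose, h.choose_spec.1, h.choose_spec.2.2,
        h.choose_spec.2.1⟩) x

theorem lstar_zero : lstar (0 : LCMS P) = 0 := rfl

theorem lstar_cls (p q : P) : lstar (cls p q) = cls q p := rfl

theorem lcms_cases (s : LCMS P) : s = 0 ∨ ∃ p q : P, s = cls p q := by
  cases s with
  | none => exact Or.inl rfl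
  | some x =>
    obtain ⟨⟨p, q⟩, hx⟩ := Quot.exists_rep x
    exact Or.inr ⟨p, q, by rw [← hx]; rfl⟩

theorem lmul_comp (hlc : ∀ a b c : P, a * b = a * c → b = c) (x y z : P) :
    lmul hlc (cls x y) (cls y z) = cls x z := by
  rw [lmul_cls, mulFun_spec hlc (q' := 1) (r' := 1) rfl
    (by rw [mul_one, Set.inter_self]), mul_one, mul_one]

theorem image_core (hlc : ∀ a b c : P, a * b = a * c → b = c) (x y z : P) :
    rIdeal (x * y) ∩ rIdeal (x * z) = (fun w => x * w) '' (rIdeal y ∩ rIdeal z) := by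
  rw [rIdeal_mul_eq_image, rIdeal_mul_eq_image,
    ← Set.image_inter (fun a b h => hlc x a b h)]

theorem lmul_assoc (hlc : ∀ a b c : P, a * b = a * c → b = c)
    (hlcm : ∀ p q : P, rIdeal p ∩ rIdeal q = ∅ ∨ ∃ r : P, rIdeal p ∩ rIdeal q = rIdeal r)
    (x y z : LCMS P) : lmul hlc (lmul hlc x y) z = lmul hlc x (lmul hlc y z) := by
  rcases lcms_cases x with rfl | ⟨p, q, rfl⟩
  · simp only [lmul_zero_left]
  rcases lcms_cases y with rfl | ⟨r, t, rfl⟩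
  · simp only [lmul_zero_left, lmul_zero_right]
  rcases lcms_cases z with rfl | ⟨v, w, rfl⟩
  · simp only [lmul_zero_right]
  rcases hlcm q r with hqr | ⟨l, hqr⟩
  · rw [lmul_cls hlc, mulFun_empty hqr, lmul_zero_left]
    rcases hlcm t v with htv | ⟨m, htv⟩
    · rw [lmul_cls hlc, mulFun_empty htv, lmul_zero_right]
    · have hm := self_mem m
      rw [← htv] at hm
      obtain ⟨⟨a1, ha1'⟩, ⟨b1, hb1'⟩⟩ := hm
      have ha1 : t * a1 = m := ha1'
      have hb1 : v * b1 = m := hb1'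
      rw [lmul_cls hlc (p := r),
        mulFun_spec hlc (ha1.trans hb1.symm) (by rw [ha1]; exact htv),
        lmul_cls hlc, mulFun_empty ?he]
      case he =>
        have hsub : rIdeal q ∩ rIdeal (r * a1) ⊆ rIdeal q ∩ rIdeal r :=
          Set.inter_subset_inter_right _ (rIdeal_mul_subset r a1)
        rw [hqr] at hsub
        exact Set.subset_empty_iff.1 hsub
  · have hl := self_mem l
    rw [← hqr] at hl
    obtain ⟨⟨q1, hq1'⟩, ⟨r1, hr1'⟩⟩ := hl
    have hq1 : q * q1 = l := hq1'
    have hr1 : r * r1 = l := hr1'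
    rw [lmul_cls hlc, mulFun_spec hlc (hq1.trans hr1.symm) (by rw [hq1]; exact hqr)]
    rcases hlcm t v with htv | ⟨m, htv⟩
    · rw [lmul_cls hlc (p := r), mulFun_empty htv, lmul_zero_right,
        lmul_cls hlc, mulFun_empty ?he]
      case he =>
        have hsub : rIdeal (t * r1) ∩ rIdeal v ⊆ rIdeal t ∩ rIdeal v :=
          Set.inter_subset_inter_left _ (rIdeal_mul_subset t r1)
        rw [htv] at hsub
        exact Set.subset_empty_iff.1 hsub
    · have hm := self_mem m
      rw [← htv] at hm
      obtain ⟨⟨a1, ha1'⟩, ⟨b1, hb1'⟩⟩ := hm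
      have ha1 : t * a1 = m := ha1'
      have hb1 : v * b1 = m := hb1'
      rw [lmul_cls hlc (p := r),
        mulFun_spec hlc (ha1.trans hb1.symm) (by rw [ha1]; exact htv)]
      have eL : rIdeal (t * r1) ∩ rIdeal v
          = (fun x => t * x) '' (rIdeal r1 ∩ rIdeal a1) := by
        have e1 : rIdeal (t * r1) ∩ rIdeal v
            = rIdeal (t * r1) ∩ (rIdeal t ∩ rIdeal v) := by
          rw [← Set.inter_assoc,
            Set.inter_eq_self_of_subset_left (rIdeal_mul_subset t r1)]
        rw [e1, htv, ← ha1, image_core hlc]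
      have eR : rIdeal q ∩ rIdeal (r * a1)
          = (fun x => r * x) '' (rIdeal r1 ∩ rIdeal a1) := by
        have e1 : rIdeal q ∩ rIdeal (r * a1)
            = (rIdeal q ∩ rIdeal r) ∩ rIdeal (r * a1) := by
          rw [Set.inter_assoc,
            Set.inter_eq_self_of_subset_right (rIdeal_mul_subset r a1)]
        rw [e1, hqr, ← hr1, image_core hlc]
      rcases hlcm r1 a1 with hra | ⟨n, hra⟩
      · rw [lmul_cls hlc, mulFun_empty (by rw [eL, hra, Set.image_empty]),
          lmul_cls hlc, mulFun_empty (by rw [eR, hra, Set.image_empty])]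
      · have hn := self_mem n
        rw [← hra] at hn
        obtain ⟨⟨d, hd'⟩, ⟨e, he'⟩⟩ := hn
        have hd : r1 * d = n := hd'
        have he : a1 * e = n := he'
        have h1R : q * (q1 * d) = (r * a1) * e := by
          rw [← mul_assoc, hq1, ← hr1, mul_assoc, hd, ← he, ← mul_assoc]
        have h2R : rIdeal q ∩ rIdeal (r * a1) = rIdeal (q * (q1 * d)) := by
          rw [eR, hra, ← rIdeal_mul_eq_image]
          congr 1
          rw [← hd, ← mul_assoc, hr1, ← hq1, mul_assoc]
        have h1L : (t * r1) * d = v * (b1 * e) := by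
          rw [mul_assoc, hd, ← he, ← mul_assoc, ha1, ← hb1, mul_assoc]
        have h2L : rIdeal (t * r1) ∩ rIdeal v = rIdeal ((t * r1) * d) := by
          rw [eL, hra, ← rIdeal_mul_eq_image]
          congr 1
          rw [← hd, ← mul_assoc]
        rw [lmul_cls hlc, mulFun_spec hlc h1L h2L, lmul_cls hlc,
          mulFun_spec hlc h1R h2R, mul_assoc, ← mul_assoc w]

theorem lmul_unique (hlc : ∀ a b c : P, a * b = a * c → b = c)
    (hlcm : ∀ p q : P, rIdeal p ∩ rIdeal q = ∅ ∨ ∃ r : P, rIdeal p ∩ rIdeal q = rIdeal r)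
    (s t : LCMS P)
    (H1 : lmul hlc (lmul hlc s t) s = s) (H2 : lmul hlc (lmul hlc t s) t = t) :
    t = lstar s := by
  rcases lcms_cases s with rfl | ⟨p, q, rfl⟩
  · rcases lcms_cases t with rfl | ⟨a, b, rfl⟩
    · rfl
    · exfalso
      rw [lmul_zero_right, lmul_zero_left] at H2
      exact cls_ne_zero a b H2.symm
  rcases lcms_cases t with rfl | ⟨a, b, rfl⟩
  · exfalso
    rw [lmul_zero_right, lmul_zero_left] at H1
    exact cls_ne_zero p q H1.symm
  rw [lstar_cls]
  rcases hlcm q a with hqa | ⟨l, hqa⟩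
  · exfalso
    rw [lmul_cls hlc, mulFun_empty hqa, lmul_zero_left] at H1
    exact cls_ne_zero p q H1.symm
  have hll := self_mem l
  rw [← hqa] at hll
  obtain ⟨⟨q1, hq1'⟩, ⟨a1, ha1'⟩⟩ := hll
  have hq1 : q * q1 = l := hq1'
  have ha1 : a * a1 = l := ha1'
  rw [lmul_cls hlc,
    mulFun_spec hlc (hq1.trans ha1.symm) (by rw [hq1]; exact hqa)] at H1
  rcases hlcm (b * a1) p with hbp | ⟨m2, hbp⟩
  · exfalso
    rw [lmul_cls hlc, mulFun_empty hbp] at H1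
    exact cls_ne_zero p q H1.symm
  have hmm := self_mem m2
  rw [← hbp] at hmm
  obtain ⟨⟨c, hc'⟩, ⟨d, hd2'⟩⟩ := hmm
  have hc : (b * a1) * c = m2 := hc'
  have hd2 : p * d = m2 := hd2'
  rw [lmul_cls hlc,
    mulFun_spec hlc (hc.trans hd2.symm) (by rw [hc]; exact hbp)] at H1
  obtain ⟨u, hu, hA0, hB0⟩ := cls_eq_iff.1 H1
  have hA : p * q1 * c * u = p := hA0
  have hq1cu : q1 * (c * u) = 1 := by
    refine hlc p _ _ ?_
    have h : p * (q1 * (c * u)) = p := by rw [← mul_assoc, ← mul_assoc]; exact hA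
    rw [h, mul_one]
  rcases hlcm b p with hbp2 | ⟨n2, hbp2⟩
  · exfalso
    rw [lmul_cls hlc, mulFun_empty hbp2, lmul_zero_left] at H2
    exact cls_ne_zero a b H2.symm
  have hnn := self_mem n2
  rw [← hbp2] at hnn
  obtain ⟨⟨b1, hb1'⟩, ⟨p1, hp1'⟩⟩ := hnn
  have hb1 : b * b1 = n2 := hb1'
  have hp1 : p * p1 = n2 := hp1'
  rw [lmul_cls hlc,
    mulFun_spec hlc (hb1.trans hp1.symm) (by rw [hb1]; exact hbp2)] at H2
  rcases hlcm (q * p1) a with hqpa | ⟨k, hqpa⟩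
  · exfalso
    rw [lmul_cls hlc, mulFun_empty hqpa] at H2
    exact cls_ne_zero a b H2.symm
  have hkk := self_mem k
  rw [← hqpa] at hkk
  obtain ⟨⟨e, he'⟩, ⟨f, hf'⟩⟩ := hkk
  have he : (q * p1) * e = k := he'
  have hf : a * f = k := hf'
  rw [lmul_cls hlc,
    mulFun_spec hlc (he.trans hf.symm) (by rw [he]; exact hqpa)] at H2
  obtain ⟨v, hv, hC0, hD0⟩ := cls_eq_iff.1 H2
  have hC : a * b1 * e * v = a := hC0
  have hD : b * f * v = b := hD0
  have hfv : f * v = 1 := hlc b _ _ (by rw [← mul_assoc, hD, mul_one])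
  have hb1ev : b1 * (e * v) = 1 := by
    refine hlc a _ _ ?_
    have h : a * (b1 * (e * v)) = a := by rw [← mul_assoc, ← mul_assoc]; exact hC
    rw [h, mul_one]
  have hqx : q * (p1 * (e * v)) = a := by
    rw [← mul_assoc, ← mul_assoc, he, ← hf, mul_assoc, hfv, mul_one]
  have hay : a * (a1 * (c * u)) = q := by
    rw [← mul_assoc, ha1, ← hq1, mul_assoc, hq1cu, mul_one]
  have hxy : (p1 * (e * v)) * (a1 * (c * u)) = 1 := hlc q _ _ (by
    rw [← mul_assoc, hqx, hay, mul_one])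
  have hyx : (a1 * (c * u)) * (p1 * (e * v)) = 1 := hlc a _ _ (by
    rw [← mul_assoc, hay, hqx, mul_one])
  have hunit : IsUnit (p1 * (e * v)) := ⟨⟨_, _, hxy, hyx⟩, rfl⟩
  have hpx : p * (p1 * (e * v)) = b := by
    rw [← mul_assoc, hp1, ← hb1, mul_assoc, hb1ev, mul_one]
  exact (cls_eq_iff.2 ⟨_, hunit, hqx, hpx⟩).symm

theorem lmul_idem (hlc : ∀ a b c : P, a * b = a * c → b = c)
    (hlcm : ∀ p q : P, rIdeal p ∩ rIdeal q = ∅ ∨ ∃ r : P, rIdeal p ∩ rIdeal q = rIdeal r)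
    (s : LCMS P) : lmul hlc s s = s ↔ s = 0 ∨ ∃ p : P, s = cls p p := by
  constructor
  · intro H
    rcases lcms_cases s with rfl | ⟨p, q, rfl⟩
    · exact Or.inl rfl
    right
    rcases hlcm q p with hqp | ⟨m, hqp⟩
    · rw [lmul_cls hlc, mulFun_empty hqp] at H
      exact absurd H.symm (cls_ne_zero p q)
    have hm := self_mem m
    rw [← hqp] at hm
    obtain ⟨⟨q1, hq1'⟩, ⟨p1, hp1'⟩⟩ := hm
    have hq1 : q * q1 = m := hq1'
    have hp1 : p * p1 = m := hp1'
    rw [lmul_cls hlc,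
      mulFun_spec hlc (hq1.trans hp1.symm) (by rw [hq1]; exact hqp)] at H
    obtain ⟨u, hu, hA0, hB0⟩ := cls_eq_iff.1 H
    have hA : p * q1 * u = p := hA0
    have hB : q * p1 * u = q := hB0
    have h1 : q1 * u = 1 := hlc p _ _ (by rw [← mul_assoc, hA, mul_one])
    have h2 : p1 * u = 1 := hlc q _ _ (by rw [← mul_assoc, hB, mul_one])
    have hqp' : q = p := by
      have hh : (q * q1) * u = (p * p1) * u := by rw [hq1, hp1]
      rw [mul_assoc, mul_assoc, h1, h2, mul_one, mul_one] at hh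
      exact hh
    exact ⟨p, by rw [hqp']⟩
  · rintro (rfl | ⟨p, rfl⟩)
    · rfl
    · exact lmul_comp hlc p p p

end Stmt19

/-- For a right LCM monoid `P`, the set
`S = {[p,q]} ∪ {0}` carries a product (given by
`[p,q][r,t] = [pq', tr']` when `qP ∩ rP = ℓP`, `qq' = rr' = ℓ`, and `0` when
`qP ∩ rP = ∅`) making it an inverse semigroup with zero, in which
`[p,q]* = [q,p]` and the idempotents are exactly `{[p,p]} ∪ {0}`. -/
theorem stmt19 {P : Type*} [Monoid P]
    (hlc : ∀ a b c : P, a * b = a * c → b = c)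
    (hlcm : ∀ p q : P, rIdeal p ∩ rIdeal q = ∅ ∨
      ∃ r : P, rIdeal p ∩ rIdeal q = rIdeal r) :
    ∃ (mul : LCMS P → LCMS P → LCMS P) (star : LCMS P → LCMS P),
      (∀ s : LCMS P, mul 0 s = 0 ∧ mul s 0 = 0) ∧
      (∀ p q r t : P, rIdeal q ∩ rIdeal r = ∅ →
        mul (cls p q) (cls r t) = 0) ∧
      (∀ p q r t q' r' : P, q * q' = r * r' →
        rIdeal q ∩ rIdeal r = rIdeal (q * q') →
        mul (cls p q) (cls r t) = cls (p * q') (t * r')) ∧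
      (∀ a b c : LCMS P, mul (mul a b) c = mul a (mul b c)) ∧
      (∀ s : LCMS P, mul (mul s (star s)) s = s) ∧
      (∀ s : LCMS P, mul (mul (star s) s) (star s) = star s) ∧
      (∀ s t : LCMS P, mul (mul s t) s = s → mul (mul t s) t = t →
        t = star s) ∧
      star 0 = 0 ∧ (∀ p q : P, star (cls p q) = cls q p) ∧
      (∀ s : LCMS P, mul s s = s ↔ s = 0 ∨ ∃ p : P, s = cls p p) := by
  open Stmt19 in
  refine ⟨lmul hlc, lstar,
    fun s => ⟨lmul_zero_left hlc s, lmul_zero_right hlc s⟩,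
    fun p q r t h => by rw [lmul_cls hlc]; exact mulFun_empty h,
    fun p q r t q' r' h1 h2 => by rw [lmul_cls hlc]; exact mulFun_spec hlc h1 h2,
    lmul_assoc hlc hlcm,
    ?_, ?_,
    fun s t h1 h2 => lmul_unique hlc hlcm s t h1 h2,
    rfl, fun p q => rfl,
    lmul_idem hlc hlcm⟩
  · intro s
    rcases lcms_cases s with rfl | ⟨p, q, rfl⟩
    · rfl
    · rw [lstar_cls, lmul_comp hlc p q p, lmul_comp hlc p p q]
  · intro s
    rcases lcms_cases s with rfl | ⟨p, q, rfl⟩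
    · rfl
    · rw [lstar_cls, lmul_comp hlc q p q, lmul_comp hlc q q p]
end
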